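/- arXiv:1602.07424 — 6 statements merged into one kernel-verified Lean document; each statement's English description precedes it below -/
import Mathlib

section
/- Let E be a finite set with |E| = t, let M be an integer with 3 ≤ M < t, and let S be a random subset of E distributed uniformly over all M-element subsets of E. Let Δ be a family of 3-element subsets of E, let τ(S) be the number of members of Δ contained in S, and let ξ = t(t−1)(t−2)/(M(M−1)(M−2)). Then E[ξ·τ(S)] = |Δ|. -/
open Finset
open scoped Classical

/-
Double counting the pairs (S, T) with T ∈ Δ and T ⊆ S: each k-set T lies in exactly
C(t - k, M - k) of the C(t, M) subsets of size M, and
C(t, M) · M(M-1)⋯(M-k+1) = t(t-1)⋯(t-k+1) · C(t - k, M - k),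
so E[τ(S)] = |Δ| · M(M-1)⋯(M-k+1) / t(t-1)⋯(t-k+1), which for k = 3 is |Δ| / ξ.
-/

/-- Expectation, under the uniform distribution over the `M`-element subsets of `E`,
of the function `f`. -/
noncomputable def expUnif {α : Type*} (E : Finset α) (M : ℕ) (f : Finset α → ℝ) : ℝ :=
  (∑ S ∈ E.powersetCard M, f S) / (E.powersetCard M).card

lemma expUnif_const_mul {α : Type*} (E : Finset α) (M : ℕ) (c : ℝ) (f : Finset α → ℝ) :
    expUnif E M (fun S => c * f S) = c * expUnif E M f := by
  rw [expUnif, expUnif, ← mul_sum, mul_div_assoc]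

lemma Nat.choose_mul_descFactorial {n m k : ℕ} (hkm : k ≤ m) :
    n.choose m * m.descFactorial k = n.descFactorial k * (n - k).choose (m - k) := by
  rw [descFactorial_eq_factorial_mul_choose, descFactorial_eq_factorial_mul_choose,
    ← mul_assoc, mul_comm (n.choose m), mul_assoc, Nat.choose_mul hkm, mul_assoc]

lemma sum_card_filter_subset_powersetCard {α : Type*} [DecidableEq α] {E : Finset α}
    {Δ : Finset (Finset α)} {k M : ℕ} (hΔ : ∀ T ∈ Δ, T ⊆ E ∧ #T = k) (hkM : k ≤ M) :
    ∑ S ∈ E.powersetCard M, #(Δ.filter (fun T => T ⊆ S))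
      = #Δ * (#E - k).choose (M - k) := by
  calc ∑ S ∈ E.powersetCard M, #(Δ.filter (fun T => T ⊆ S))
      = ∑ T ∈ Δ, #((E.powersetCard M).filter (T ⊆ ·)) := by
        simp only [card_eq_sum_ones, sum_filter]
        exact sum_comm
    _ = ∑ _T ∈ Δ, (#E - k).choose (M - k) := by
        refine sum_congr rfl fun T hT => ?_
        obtain ⟨hTE, hTk⟩ := hΔ T hT
        rw [card_filter_powersetCard_subset T E M hTE (hTk ▸ hkM), hTk]
    _ = #Δ * (#E - k).choose (M - k) := by rw [sum_const, smul_eq_mul]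

theorem expUnif_descFactorial_div_mul_card_filter_subset {α : Type*} [DecidableEq α]
    {E : Finset α} {Δ : Finset (Finset α)} {k M : ℕ}
    (hΔ : ∀ T ∈ Δ, T ⊆ E ∧ #T = k) (hkM : k ≤ M) (hME : M ≤ #E) :
    expUnif E M (fun S => ((#E).descFactorial k / M.descFactorial k : ℝ)
      * #(Δ.filter (fun T => T ⊆ S))) = #Δ := by
  have hchoose : ((#E).choose M : ℝ) ≠ 0 := by exact_mod_cast (Nat.choose_pos hME).ne'
  have hdesc : (M.descFactorial k : ℝ) ≠ 0 := by
    exact_mod_cast (Nat.descFactorial_pos.mpr hkM).ne'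
  have hidentity : ((#E).choose M * M.descFactorial k : ℝ)
      = (#E).descFactorial k * (#E - k).choose (M - k) := by
    exact_mod_cast Nat.choose_mul_descFactorial hkM
  have hsum : ∑ S ∈ E.powersetCard M, (#(Δ.filter (fun T => T ⊆ S)) : ℝ)
      = #Δ * (#E - k).choose (M - k) := by
    exact_mod_cast sum_card_filter_subset_powersetCard hΔ hkM
  rw [expUnif_const_mul, expUnif, card_powersetCard, hsum, div_mul_div_comm,
    div_eq_iff (mul_ne_zero hdesc hchoose)]
  linear_combination (-(#Δ : ℝ)) * hidentity

lemma Nat.cast_descFactorial_three {n : ℕ} (hn : 2 ≤ n) :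
    (n.descFactorial 3 : ℝ) = n * (n - 1) * (n - 2) := by
  simp only [Nat.descFactorial_succ, Nat.descFactorial_zero, Nat.sub_zero]
  push_cast [Nat.cast_sub hn, Nat.cast_sub (by omega : 1 ≤ n)]
  ring

/-- Unbiasedness of the TRIÈST-base estimator: if `S` is a uniformly random `M`-element
subset of a `t`-element set `E` (with `3 ≤ M < t`), `Δ` is a family of `3`-element
subsets of `E`, `τ(S)` counts the members of `Δ` contained in `S`, and
`ξ = t(t-1)(t-2)/(M(M-1)(M-2))`, then `E[ξ·τ(S)] = |Δ|`. -/
theorem stmt1 {α : Type*} [DecidableEq α] (E : Finset α) (t M : ℕ)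
    (Δ : Finset (Finset α)) (ξ : ℝ)
    (hE : E.card = t) (hM : 3 ≤ M) (hMt : M < t)
    (hΔ : ∀ T ∈ Δ, T ⊆ E ∧ T.card = 3)
    (hξ : ξ = (t : ℝ) * ((t : ℝ) - 1) * ((t : ℝ) - 2) /
      ((M : ℝ) * ((M : ℝ) - 1) * ((M : ℝ) - 2))) :
    expUnif E M (fun S => ξ * ((Δ.filter (fun T => T ⊆ S)).card : ℝ)) = (Δ.card : ℝ) := by
  have hξ_desc : ξ = ((#E).descFactorial 3 / M.descFactorial 3 : ℝ) := by
    rw [hξ, hE, Nat.cast_descFactorial_three (by omega),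
      Nat.cast_descFactorial_three (by omega)]
  rw [hξ_desc]
  exact expUnif_descFactorial_div_mul_card_filter_subset hΔ hM (hE ▸ hMt.le)
end

section
/- Let G be a finite simple graph whose edge set E has t elements, let Δ be the set of triangles of G (each identified with its set of three edges), and assume |Δ| > 0. Let h be the maximum, over edges e of G, of the number of triangles of G containing e. Fix ε, δ ∈ (0,1) and p ∈ (0,1] with p ≥ (2·ε^{−2}·ln((3h+1)/δ)·(3h+1)/|Δ|)^{1/3}. Form a random subset of E by including each edge independently with probability p, and let X be the number of triangles of G all three of whose edges are included. Then Pr(|p^{−3}·X − |Δ|| < ε·|Δ|) > 1 − δ. -/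
open Finset
open scoped Classical

/-- The triangles of a simple graph `G`, each identified with its set of three edges. -/
noncomputable def triEdges {V : Type*} [Fintype V] [DecidableEq V]
    (G : SimpleGraph V) [DecidableRel G.Adj] : Finset (Finset (Sym2 V)) :=
  (G.cliqueFinset 3).image (fun s => s.sym2.filter (fun e => ¬ e.IsDiag))

/-- Probability of the event `P` under independent Bernoulli(`p`) sampling of the
elements of `E`. -/
noncomputable def prBer {α : Type*} [DecidableEq α] (E : Finset α) (p : ℝ)
    (P : Finset α → Prop) : ℝ :=
  ∑ S ∈ E.powerset, if P S then p ^ S.card * (1 - p) ^ (E.card - S.card) else 0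

/-!
Let `X` be the number of triangles inside the sampled edge set. The indicator of a triangle
depends on three coordinates only, and every edge lies in at most `h` triangles, so Finner's
generalisation of Hölder's inequality bounds the moment generating function by a product of
`L^h` norms: `E[e^{tX}] ≤ (1 + p³(e^{ht} - 1))^{|Δ|/h} ≤ exp(p³|Δ|(e^{ht} - 1)/h)`. This is the
bound for `h` times a Poisson variable of mean `p³|Δ|/h`, and the usual Chernoff argument gives
`Pr(X ≥ (1+ε)p³|Δ|) ≤ exp(-ε²p³|Δ|/(3h))` and `Pr(X ≤ (1-ε)p³|Δ|) ≤ exp(-ε²p³|Δ|/(2h))`.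
The lower bound on `p` makes both tails at most `(δ/(3h+1))²`.
-/

section Bernoulli

variable {α : Type*}

noncomputable def expBer (E : Finset α) (p : ℝ) (f : Finset α → ℝ) : ℝ :=
  ∑ S ∈ E.powerset, p ^ #S * (1 - p) ^ (#E - #S) * f S

variable {E : Finset α} {p : ℝ}

lemma expBer_empty (f : Finset α → ℝ) : expBer ∅ p f = f ∅ := by
  simp [expBer]

lemma expBer_const (c : ℝ) : expBer E p (fun _ => c) = c := by
  rw [expBer, ← sum_mul, sum_pow_mul_eq_add_pow, add_sub_cancel, one_pow, one_mul]

lemma expBer_add (f g : Finset α → ℝ) :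
    expBer E p (fun S => f S + g S) = expBer E p f + expBer E p g := by
  simp only [expBer, mul_add, sum_add_distrib]

lemma expBer_const_mul (c : ℝ) (f : Finset α → ℝ) :
    expBer E p (fun S => c * f S) = c * expBer E p f := by
  simp only [expBer, mul_sum]
  exact sum_congr rfl fun _ _ => by ring

lemma expBer_mono (hp0 : 0 ≤ p) (hp1 : p ≤ 1) {f g : Finset α → ℝ}
    (hfg : ∀ S ⊆ E, f S ≤ g S) : expBer E p f ≤ expBer E p g := by
  have : 0 ≤ 1 - p := sub_nonneg.2 hp1
  exact sum_le_sum fun S hS => by gcongr; exact hfg S (mem_powerset.1 hS)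

lemma expBer_congr {f g : Finset α → ℝ} (hfg : ∀ S ⊆ E, f S = g S) :
    expBer E p f = expBer E p g :=
  sum_congr rfl fun S hS => by rw [hfg S (mem_powerset.1 hS)]

lemma expBer_nonneg (hp0 : 0 ≤ p) (hp1 : p ≤ 1) {f : Finset α → ℝ} (hf : ∀ S, 0 ≤ f S) :
    0 ≤ expBer E p f :=
  (expBer_const 0).symm.le.trans (expBer_mono hp0 hp1 fun S _ => hf S)

variable [DecidableEq α]

lemma prBer_eq_expBer (P : Finset α → Prop) [DecidablePred P] :
    prBer E p P = expBer E p (fun S => if P S then 1 else 0) :=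
  sum_congr rfl fun S _ => by by_cases hS : P S <;> simp [hS]

lemma expBer_insert {e : α} (he : e ∉ E) (f : Finset α → ℝ) :
    expBer (insert e E) p f
      = (1 - p) * expBer E p f + p * expBer E p (fun S => f (insert e S)) := by
  rw [expBer, sum_powerset_insert he, expBer, expBer, mul_sum, mul_sum]
  congr 1 <;> refine sum_congr rfl fun S hS => ?_
  · have : #S ≤ #E := card_le_card (mem_powerset.1 hS)
    rw [card_insert_of_notMem he, Nat.sub_add_comm this, pow_succ]
    ring
  · have heS : e ∉ S := fun h => he (mem_powerset.1 hS h)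
    rw [card_insert_of_notMem he, card_insert_of_notMem heS, Nat.add_sub_add_right, pow_succ]
    ring

lemma prBer_add_prBer_not (P : Finset α → Prop) :
    prBer E p P + prBer E p (fun S => ¬ P S) = 1 := by
  rw [prBer_eq_expBer, prBer_eq_expBer, ← expBer_add]
  exact (expBer_congr fun S _ => by split_ifs <;> simp_all).trans (expBer_const 1)

lemma prBer_le_add (hp0 : 0 ≤ p) (hp1 : p ≤ 1) {P Q R : Finset α → Prop}
    (hPQR : ∀ S, P S → Q S ∨ R S) : prBer E p P ≤ prBer E p Q + prBer E p R := by
  rw [prBer_eq_expBer, prBer_eq_expBer, prBer_eq_expBer, ← expBer_add]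
  refine expBer_mono hp0 hp1 fun S _ => ?_
  have := hPQR S
  split_ifs <;> simp_all

lemma prBer_le_expBer (hp0 : 0 ≤ p) (hp1 : p ≤ 1) {P : Finset α → Prop} {g : Finset α → ℝ}
    (hg : ∀ S, 0 ≤ g S) (hPg : ∀ S, P S → 1 ≤ g S) : prBer E p P ≤ expBer E p g := by
  rw [prBer_eq_expBer]
  refine expBer_mono hp0 hp1 fun S _ => ?_
  split_ifs with hS
  exacts [hPg S hS, hg S]

lemma prBer_subset_eq_pow_card {T : Finset α} (hTE : T ⊆ E) :
    prBer E p (T ⊆ ·) = p ^ #T := by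
  induction E using Finset.induction_on generalizing T with
  | empty => simp [subset_empty.1 hTE, prBer]
  | insert e E he ih =>
    rw [prBer_eq_expBer, expBer_insert he, ← prBer_eq_expBer,
      ← prBer_eq_expBer (fun S => T ⊆ insert e S)]
    by_cases heT : e ∈ T
    · have hnot : prBer E p (T ⊆ ·) = 0 := by
        rw [prBer_eq_expBer]
        exact (expBer_congr fun S hS => if_neg fun hTS => he (hS (hTS heT))).trans (expBer_const 0)
      simp_rw [subset_insert_iff]
      rw [hnot, ih (subset_insert_iff.1 hTE), card_erase_of_mem heT, ← pow_succ',
        Nat.sub_add_cancel (card_pos.2 ⟨e, heT⟩)]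
      ring
    · simp_rw [subset_insert_iff_of_notMem heT]
      rw [ih ((subset_insert_iff_of_notMem heT).1 hTE)]
      ring

end Bernoulli

section Holder

variable {ι : Type*} {s : Finset ι} {h : ℕ}

lemma prod_le_sum_pow_div_add (hs : #s ≤ h) (hh : 0 < h) {x : ι → ℝ} (hx : ∀ i ∈ s, 0 ≤ x i) :
    ∏ i ∈ s, x i ≤ (∑ i ∈ s, x i ^ h) / h + (1 - #s / h) := by
  have hh' : (0 : ℝ) < h := Nat.cast_pos.2 hh
  -- weighted AM-GM for the `x i ^ h` with weights `1 / h`, padded by `1` with the remaining weight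
  let w : Option ι → ℝ := fun o => o.elim (1 - #s / h) fun _ => (h : ℝ)⁻¹
  let z : Option ι → ℝ := fun o => o.elim 1 fun i => x i ^ h
  have hw : ∀ o ∈ s.insertNone, 0 ≤ w o := by
    rintro (_ | i) _
    · have : (#s : ℝ) ≤ h := Nat.cast_le.2 hs
      simp only [w, Option.elim_none, sub_nonneg]
      exact (div_le_one hh').2 this
    · exact inv_nonneg.2 hh'.le
  have hw1 : ∑ o ∈ s.insertNone, w o = 1 := by
    simp only [sum_insertNone, w, Option.elim_none, Option.elim_some, sum_const, nsmul_eq_mul]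
    field_simp
    ring
  have hz : ∀ o ∈ s.insertNone, 0 ≤ z o := by
    rintro (_ | i) hi
    · exact zero_le_one
    · exact pow_nonneg (hx i (some_mem_insertNone.1 hi)) h
  have amgm := Real.geom_mean_le_arith_mean_weighted _ w z hw hw1 hz
  simp only [prod_insertNone, sum_insertNone, w, z, Option.elim_none, Option.elim_some,
    Real.one_rpow, one_mul, mul_one] at amgm
  rw [prod_congr rfl fun i hi => Real.pow_rpow_inv_natCast (hx i hi) hh.ne', ← mul_sum] at amgm
  linarith [show (h : ℝ)⁻¹ * ∑ i ∈ s, x i ^ h = (∑ i ∈ s, x i ^ h) / h from inv_mul_eq_div _ _]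

lemma one_sub_mul_prod_add_mul_prod_le_one (hs : #s ≤ h) {p : ℝ} (hp0 : 0 ≤ p) (hp1 : p ≤ 1)
    {x y : ι → ℝ} (hx : ∀ i ∈ s, 0 ≤ x i) (hy : ∀ i ∈ s, 0 ≤ y i)
    (hxy : ∀ i ∈ s, (1 - p) * x i ^ h + p * y i ^ h = 1) :
    (1 - p) * ∏ i ∈ s, x i + p * ∏ i ∈ s, y i ≤ 1 := by
  rcases Nat.eq_zero_or_pos h with rfl | hh
  · simp [card_eq_zero.1 (Nat.le_zero.1 hs)]
  have hsum : (1 - p) * ∑ i ∈ s, x i ^ h + p * ∑ i ∈ s, y i ^ h = #s := by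
    rw [mul_sum, mul_sum, ← sum_add_distrib, sum_congr rfl hxy, sum_const, nsmul_one]
  have : 0 ≤ 1 - p := sub_nonneg.2 hp1
  calc (1 - p) * ∏ i ∈ s, x i + p * ∏ i ∈ s, y i
      ≤ (1 - p) * ((∑ i ∈ s, x i ^ h) / h + (1 - #s / h))
        + p * ((∑ i ∈ s, y i ^ h) / h + (1 - #s / h)) := by
        gcongr
        exacts [prod_le_sum_pow_div_add hs hh hx, prod_le_sum_pow_div_add hs hh hy]
    _ = ((1 - p) * ∑ i ∈ s, x i ^ h + p * ∑ i ∈ s, y i ^ h) / h + (1 - #s / h) := by ring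
    _ = 1 := by rw [hsum]; ring

lemma one_sub_mul_prod_add_mul_prod_le (hs : #s ≤ h) {p : ℝ} (hp0 : 0 ≤ p) (hp1 : p ≤ 1)
    {a b : ι → ℝ} (ha : ∀ i ∈ s, 0 ≤ a i) (hb : ∀ i ∈ s, 0 ≤ b i) :
    (1 - p) * ∏ i ∈ s, a i + p * ∏ i ∈ s, b i
      ≤ ∏ i ∈ s, ((1 - p) * a i ^ h + p * b i ^ h) ^ (h⁻¹ : ℝ) := by
  rcases Nat.eq_zero_or_pos h with rfl | hh
  · simp [card_eq_zero.1 (Nat.le_zero.1 hs)]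
  set N : ι → ℝ := fun i => ((1 - p) * a i ^ h + p * b i ^ h) ^ (h⁻¹ : ℝ)
  have h1p : 0 ≤ 1 - p := sub_nonneg.2 hp1
  have hbase : ∀ i ∈ s, 0 ≤ (1 - p) * a i ^ h + p * b i ^ h := fun i hi =>
    add_nonneg (mul_nonneg h1p (pow_nonneg (ha i hi) h)) (mul_nonneg hp0 (pow_nonneg (hb i hi) h))
  have hN0 : ∀ i ∈ s, 0 ≤ N i := fun i hi => Real.rpow_nonneg (hbase i hi) _
  by_cases hN : ∃ i ∈ s, N i = 0
  · obtain ⟨i, hi, hNi⟩ := hN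
    rw [Real.rpow_eq_zero (hbase i hi) (by positivity), add_eq_zero_iff_of_nonneg
      (mul_nonneg h1p (pow_nonneg (ha i hi) h)) (mul_nonneg hp0 (pow_nonneg (hb i hi) h))] at hNi
    have hA : (1 - p) * ∏ i ∈ s, a i = 0 := by
      rcases mul_eq_zero.1 hNi.1 with h0 | h0
      · rw [h0, zero_mul]
      · rw [prod_eq_zero hi ((pow_eq_zero_iff hh.ne').1 h0), mul_zero]
    have hB : p * ∏ i ∈ s, b i = 0 := by
      rcases mul_eq_zero.1 hNi.2 with h0 | h0
      · rw [h0, zero_mul]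
      · rw [prod_eq_zero hi ((pow_eq_zero_iff hh.ne').1 h0), mul_zero]
    rw [hA, hB, add_zero]
    exact prod_nonneg hN0
  push Not at hN
  have hNpos : ∀ i ∈ s, 0 < N i := fun i hi => (hN0 i hi).lt_of_ne' (hN i hi)
  have hnorm : ∀ i ∈ s, (1 - p) * (a i / N i) ^ h + p * (b i / N i) ^ h = 1 := by
    intro i hi
    have hpos : 0 < (1 - p) * a i ^ h + p * b i ^ h :=
      Real.rpow_inv_natCast_pow (hbase i hi) hh.ne' ▸ pow_pos (hNpos i hi) h
    rw [div_pow, div_pow, Real.rpow_inv_natCast_pow (hbase i hi) hh.ne']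
    field_simp
  have key := one_sub_mul_prod_add_mul_prod_le_one hs hp0 hp1
    (fun i hi => div_nonneg (ha i hi) (hN0 i hi)) (fun i hi => div_nonneg (hb i hi) (hN0 i hi))
    hnorm
  rw [prod_div_distrib, prod_div_distrib, mul_div_assoc', mul_div_assoc', ← add_div,
    div_le_one (prod_pos hNpos)] at key
  exact key

end Holder

section Finner

variable {α ι : Type*} {E : Finset α} {p : ℝ} {h : ℕ}

noncomputable def normBer (E : Finset α) (p : ℝ) (h : ℕ) (g : Finset α → ℝ) : ℝ :=
  expBer E p (fun S => g S ^ h) ^ (h⁻¹ : ℝ)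

lemma normBer_nonneg (hp0 : 0 ≤ p) (hp1 : p ≤ 1) {g : Finset α → ℝ} (hg : ∀ S, 0 ≤ g S) :
    0 ≤ normBer E p h g :=
  Real.rpow_nonneg (expBer_nonneg hp0 hp1 fun S => pow_nonneg (hg S) h) _

variable [DecidableEq α]

lemma normBer_insert (hp0 : 0 ≤ p) (hp1 : p ≤ 1) (hh : 0 < h) {e : α} (he : e ∉ E)
    {g : Finset α → ℝ} (hg : ∀ S, 0 ≤ g S) :
    normBer (insert e E) p h g = ((1 - p) * normBer E p h g ^ h
      + p * normBer E p h (fun S => g (insert e S)) ^ h) ^ (h⁻¹ : ℝ) := by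
  simp only [normBer, expBer_insert he, Real.rpow_inv_natCast_pow
    (expBer_nonneg hp0 hp1 fun S => pow_nonneg (hg _) h) hh.ne']

lemma normBer_insert_of_forall_insert_eq (hp0 : 0 ≤ p) (hp1 : p ≤ 1) (hh : 0 < h) {e : α}
    (he : e ∉ E) {g : Finset α → ℝ} (hg : ∀ S, 0 ≤ g S) (hge : ∀ S, g (insert e S) = g S) :
    normBer (insert e E) p h g = normBer E p h g := by
  rw [normBer_insert hp0 hp1 hh he hg, funext hge, ← add_mul, sub_add_cancel, one_mul,
    Real.pow_rpow_inv_natCast (normBer_nonneg hp0 hp1 hg) hh.ne']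

/-- Finner's inequality for independent Bernoulli sampling. Conditioning on one element `e`,
at most `h` of the factors depend on it, and the two-point Hölder inequality
`one_sub_mul_prod_add_mul_prod_le` closes the induction on `E`. -/
theorem expBer_prod_le_prod_normBer (hp0 : 0 ≤ p) (hp1 : p ≤ 1) (hh : 0 < h)
    (A : Finset ι) (f : ι → Finset α) (hdeg : ∀ e ∈ E, #{i ∈ A | e ∈ f i} ≤ h)
    (g : ι → Finset α → ℝ) (hg0 : ∀ i S, 0 ≤ g i S) (hgf : ∀ i S, g i S = g i (S ∩ f i)) :
    expBer E p (fun S => ∏ i ∈ A, g i S) ≤ ∏ i ∈ A, normBer E p h (g i) := by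
  induction E using Finset.induction_on generalizing g with
  | empty =>
    simp only [expBer_empty, normBer, Real.pow_rpow_inv_natCast (hg0 _ ∅) hh.ne', le_refl]
  | insert e E he ih =>
    set g' : ι → Finset α → ℝ := fun i S => g i (insert e S)
    have hg'f : ∀ i S, g' i S = g' i (S ∩ f i) := fun i S => by
      simp only [g']
      rw [hgf i (insert e S), hgf i (insert e (S ∩ f i))]
      congr 1
      ext x
      simp only [mem_inter, mem_insert]
      tauto
    have hfix : ∀ i, e ∉ f i → ∀ S, g i (insert e S) = g i S := fun i hei S => by
      rw [hgf, hgf i S, insert_inter_of_notMem hei]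
    have ih' := ih (fun e' he' => hdeg e' (mem_insert_of_mem he'))
    have hN := fun i => normBer_nonneg (E := E) (h := h) hp0 hp1 (hg0 i)
    have h1p : 0 ≤ 1 - p := sub_nonneg.2 hp1
    calc expBer (insert e E) p (fun S => ∏ i ∈ A, g i S)
        = (1 - p) * expBer E p (fun S => ∏ i ∈ A, g i S)
          + p * expBer E p (fun S => ∏ i ∈ A, g' i S) := expBer_insert he _
      _ ≤ (1 - p) * ∏ i ∈ A, normBer E p h (g i) + p * ∏ i ∈ A, normBer E p h (g' i) := by
        gcongr
        exacts [ih' g hg0 hgf, ih' g' (fun i S => hg0 i _) hg'f]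
      _ = ((1 - p) * ∏ i ∈ A with e ∈ f i, normBer E p h (g i)
          + p * ∏ i ∈ A with e ∈ f i, normBer E p h (g' i))
          * ∏ i ∈ A with e ∉ f i, normBer E p h (g i) := by
        rw [← prod_filter_mul_prod_filter_not A (e ∈ f ·),
          ← prod_filter_mul_prod_filter_not A (e ∈ f ·) (fun i => normBer E p h (g' i)),
          prod_congr rfl fun i hi => congrArg _ (funext (hfix i (mem_filter.1 hi).2))]
        ring
      _ ≤ (∏ i ∈ A with e ∈ f i, normBer (insert e E) p h (g i))
          * ∏ i ∈ A with e ∉ f i, normBer (insert e E) p h (g i) := by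
        rw [prod_congr rfl fun i hi => normBer_insert_of_forall_insert_eq hp0 hp1 hh he (hg0 i)
          (hfix i (mem_filter.1 hi).2)]
        gcongr
        · exact prod_nonneg fun i _ => hN i
        rw [prod_congr rfl fun i _ => normBer_insert hp0 hp1 hh he (hg0 i)]
        exact one_sub_mul_prod_add_mul_prod_le (hdeg e (mem_insert_self e E)) hp0 hp1
          (fun i _ => hN i) (fun i _ => normBer_nonneg hp0 hp1 fun S => hg0 i _)
      _ = ∏ i ∈ A, normBer (insert e E) p h (g i) := prod_filter_mul_prod_filter_not _ _ _

end Finner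

section Concentration

open Real

lemma exp_neg_le_one_sub_add_sq_div_two {x : ℝ} (hx : 0 ≤ x) : exp (-x) ≤ 1 - x + x ^ 2 / 2 := by
  -- `(1 + x + x²/2)(1 - x + x²/2) = 1 + x⁴/4` and `1 + x + x²/2 ≤ exp x`
  rw [exp_neg, inv_le_iff_one_le_mul₀' (exp_pos x)]
  have hq : 0 < 1 - x + x ^ 2 / 2 := by nlinarith [sq_nonneg (x - 1)]
  nlinarith [quadratic_le_exp_of_nonneg hx, mul_le_mul_of_nonneg_right
    (quadratic_le_exp_of_nonneg hx) hq.le, pow_nonneg hx 4]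

lemma sq_div_three_le_one_add_mul_log_one_add_sub {x : ℝ} (hx0 : 0 ≤ x) (hx1 : x ≤ 1) :
    x ^ 2 / 3 ≤ (1 + x) * log (1 + x) - x := by
  have hlog := mul_le_mul_of_nonneg_left (le_log_one_add_of_nonneg hx0) (by linarith : 0 ≤ 1 + x)
  have : x ^ 2 / 3 ≤ (1 + x) * (2 * x / (x + 2)) - x := by
    rw [mul_div_assoc', div_sub' (by linarith), div_le_div_iff₀ (by norm_num) (by linarith)]
    nlinarith
  linarith

variable {α : Type*} [DecidableEq α] {E : Finset α} {p : ℝ} {Δ : Finset (Finset α)} {r h : ℕ}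

lemma expBer_exp_mul_card_le (hp0 : 0 ≤ p) (hp1 : p ≤ 1) (hh : 0 < h)
    (hΔE : ∀ T ∈ Δ, T ⊆ E) (hΔr : ∀ T ∈ Δ, #T = r) (hdeg : ∀ e ∈ E, #{T ∈ Δ | e ∈ T} ≤ h)
    (t : ℝ) :
    expBer E p (fun S => exp (t * #{T ∈ Δ | T ⊆ S}))
      ≤ exp (p ^ r * #Δ * (exp (h * t) - 1) / h) := by
  set g : Finset α → Finset α → ℝ := fun T S => if T ⊆ S then exp t else 1
  have hg0 : ∀ T S, 0 ≤ g T S := fun T S => by positivity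
  have hnorm : ∀ T ∈ Δ, normBer E p h (g T) ≤ exp (p ^ r * (exp (h * t) - 1) / h) := by
    intro T hT
    have hmom : expBer E p (fun S => g T S ^ h) = 1 + p ^ r * (exp (h * t) - 1) := by
      calc expBer E p (fun S => g T S ^ h)
          = expBer E p (fun S => (exp (h * t) - 1) * (if T ⊆ S then 1 else 0) + 1) :=
            expBer_congr fun S _ => by
              by_cases hTS : T ⊆ S <;> simp [g, hTS, ← exp_nat_mul]
        _ = 1 + p ^ r * (exp (h * t) - 1) := by
          rw [expBer_add, expBer_const_mul, expBer_const, ← prBer_eq_expBer (T ⊆ ·),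
            prBer_subset_eq_pow_card (hΔE T hT), hΔr T hT]
          ring
    have hpr : p ^ r ≤ 1 := pow_le_one₀ hp0 hp1
    rw [normBer, hmom, div_eq_mul_inv, exp_mul (p ^ r * _)]
    gcongr
    · nlinarith [exp_pos (h * t), pow_nonneg hp0 r]
    · linarith [add_one_le_exp (p ^ r * (exp (h * t) - 1))]
  calc expBer E p (fun S => exp (t * #{T ∈ Δ | T ⊆ S}))
      = expBer E p (fun S => ∏ T ∈ Δ, g T S) := expBer_congr fun S _ => by
        rw [prod_ite, prod_const, prod_const_one, mul_one, ← exp_nat_mul, mul_comm]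
    _ ≤ ∏ T ∈ Δ, normBer E p h (g T) :=
        expBer_prod_le_prod_normBer hp0 hp1 hh Δ id hdeg g hg0 fun T S => by
          simp only [g, id, subset_inter_iff, subset_refl, and_true]
    _ ≤ ∏ _T ∈ Δ, exp (p ^ r * (exp (h * t) - 1) / h) :=
        prod_le_prod (fun T _ => normBer_nonneg hp0 hp1 (hg0 T)) hnorm
    _ = exp (p ^ r * #Δ * (exp (h * t) - 1) / h) := by
        rw [prod_const, ← exp_nat_mul]
        ring_nf

lemma prBer_le_exp_of_mul_le (hp0 : 0 ≤ p) (hp1 : p ≤ 1) (hh : 0 < h)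
    (hΔE : ∀ T ∈ Δ, T ⊆ E) (hΔr : ∀ T ∈ Δ, #T = r) (hdeg : ∀ e ∈ E, #{T ∈ Δ | e ∈ T} ≤ h)
    {P : Finset α → Prop} {a t : ℝ} (hP : ∀ S, P S → t * a ≤ t * #{T ∈ Δ | T ⊆ S}) :
    prBer E p P ≤ exp (p ^ r * #Δ * (exp (h * t) - 1) / h - t * a) := by
  calc prBer E p P
      ≤ expBer E p (fun S => exp (-(t * a)) * exp (t * #{T ∈ Δ | T ⊆ S})) :=
        prBer_le_expBer hp0 hp1 (fun S => by positivity) fun S hS => by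
          rw [← exp_add]
          exact one_le_exp (by linarith [hP S hS])
    _ ≤ exp (-(t * a)) * exp (p ^ r * #Δ * (exp (h * t) - 1) / h) := by
        rw [expBer_const_mul]
        gcongr
        exact expBer_exp_mul_card_le hp0 hp1 hh hΔE hΔr hdeg t
    _ = exp (p ^ r * #Δ * (exp (h * t) - 1) / h - t * a) := by
        rw [← exp_add]
        ring_nf

theorem prBer_upper_tail (hp0 : 0 ≤ p) (hp1 : p ≤ 1) (hh : 0 < h)
    (hΔE : ∀ T ∈ Δ, T ⊆ E) (hΔr : ∀ T ∈ Δ, #T = r) (hdeg : ∀ e ∈ E, #{T ∈ Δ | e ∈ T} ≤ h)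
    {ε : ℝ} (hε0 : 0 ≤ ε) (hε1 : ε ≤ 1) :
    prBer E p (fun S => (1 + ε) * (p ^ r * #Δ) ≤ #{T ∈ Δ | T ⊆ S})
      ≤ exp (-(ε ^ 2 * (p ^ r * #Δ) / (3 * h))) := by
  have hh' : (0 : ℝ) < h := Nat.cast_pos.2 hh
  have hμ : 0 ≤ p ^ r * #Δ / h := by positivity
  refine (prBer_le_exp_of_mul_le hp0 hp1 hh hΔE hΔr hdeg (t := log (1 + ε) / h)
    fun S hS => mul_le_mul_of_nonneg_left hS (div_nonneg (log_nonneg (by linarith)) hh'.le)).trans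
    (exp_le_exp.2 ?_)
  rw [mul_div_cancel₀ _ hh'.ne', exp_log (by linarith)]
  have key := mul_le_mul_of_nonneg_left
    (sq_div_three_le_one_add_mul_log_one_add_sub hε0 hε1) hμ
  calc p ^ r * #Δ * (1 + ε - 1) / h - log (1 + ε) / h * ((1 + ε) * (p ^ r * #Δ))
      = -(p ^ r * #Δ / h * ((1 + ε) * log (1 + ε) - ε)) := by ring
    _ ≤ -(p ^ r * #Δ / h * (ε ^ 2 / 3)) := neg_le_neg key
    _ = -(ε ^ 2 * (p ^ r * #Δ) / (3 * h)) := by ring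

theorem prBer_lower_tail (hp0 : 0 ≤ p) (hp1 : p ≤ 1) (hh : 0 < h)
    (hΔE : ∀ T ∈ Δ, T ⊆ E) (hΔr : ∀ T ∈ Δ, #T = r) (hdeg : ∀ e ∈ E, #{T ∈ Δ | e ∈ T} ≤ h)
    {ε : ℝ} (hε0 : 0 ≤ ε) :
    prBer E p (fun S => (#{T ∈ Δ | T ⊆ S} : ℝ) ≤ (1 - ε) * (p ^ r * #Δ))
      ≤ exp (-(ε ^ 2 * (p ^ r * #Δ) / (2 * h))) := by
  have hh' : (0 : ℝ) < h := Nat.cast_pos.2 hh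
  have hμ : 0 ≤ p ^ r * #Δ / h := by positivity
  -- `t = -ε / h` instead of the optimal `log (1 - ε) / h` already gives the constant `1 / 2`
  refine (prBer_le_exp_of_mul_le hp0 hp1 hh hΔE hΔr hdeg (t := -ε / h)
    fun S hS => mul_le_mul_of_nonpos_left hS (div_nonpos_of_nonpos_of_nonneg (by linarith)
      hh'.le)).trans (exp_le_exp.2 ?_)
  rw [mul_div_cancel₀ _ hh'.ne']
  have key := mul_le_mul_of_nonneg_left (exp_neg_le_one_sub_add_sq_div_two hε0) hμ
  calc p ^ r * #Δ * (exp (-ε) - 1) / h - -ε / h * ((1 - ε) * (p ^ r * #Δ))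
      = p ^ r * #Δ / h * exp (-ε) - p ^ r * #Δ / h * (1 - ε + ε ^ 2) := by ring
    _ ≤ p ^ r * #Δ / h * (1 - ε + ε ^ 2 / 2) - p ^ r * #Δ / h * (1 - ε + ε ^ 2) := by
        gcongr
    _ = -(ε ^ 2 * (p ^ r * #Δ) / (2 * h)) := by ring

theorem one_sub_exp_sub_exp_le_prBer (hp0 : 0 < p) (hp1 : p ≤ 1) (hh : 0 < h)
    (hΔE : ∀ T ∈ Δ, T ⊆ E) (hΔr : ∀ T ∈ Δ, #T = r) (hdeg : ∀ e ∈ E, #{T ∈ Δ | e ∈ T} ≤ h)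
    {ε : ℝ} (hε0 : 0 ≤ ε) (hε1 : ε ≤ 1) :
    1 - exp (-(ε ^ 2 * (p ^ r * #Δ) / (3 * h))) - exp (-(ε ^ 2 * (p ^ r * #Δ) / (2 * h)))
      ≤ prBer E p (fun S => |(p ^ r)⁻¹ * #{T ∈ Δ | T ⊆ S} - #Δ| < ε * #Δ) := by
  have hq : 0 < p ^ r := pow_pos hp0 r
  have hbad := prBer_le_add (E := E) hp0.le hp1
    (P := fun S => ¬ |(p ^ r)⁻¹ * #{T ∈ Δ | T ⊆ S} - #Δ| < ε * #Δ)
    (Q := fun S => (1 + ε) * (p ^ r * #Δ) ≤ #{T ∈ Δ | T ⊆ S})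
    (R := fun S => (#{T ∈ Δ | T ⊆ S} : ℝ) ≤ (1 - ε) * (p ^ r * #Δ)) fun S hS => by
      rw [not_lt, le_abs'] at hS
      rcases hS with hS | hS
      · right
        have := (inv_mul_le_iff₀ hq).1 (by linarith : (p ^ r)⁻¹ * #{T ∈ Δ | T ⊆ S} ≤ (1 - ε) * #Δ)
        linarith
      · left
        have := (le_inv_mul_iff₀ hq).1 (by linarith : (1 + ε) * #Δ ≤ (p ^ r)⁻¹ * #{T ∈ Δ | T ⊆ S})
        linarith
  linarith [prBer_add_prBer_not (E := E) (p := p)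
      (fun S => |(p ^ r)⁻¹ * #{T ∈ Δ | T ⊆ S} - #Δ| < ε * #Δ),
    prBer_upper_tail hp0.le hp1 hh hΔE hΔr hdeg hε0 hε1,
    prBer_lower_tail (E := E) hp0.le hp1 hh hΔE hΔr hdeg hε0]

end Concentration

lemma Finset.card_sym2_filter_not_isDiag {α : Type*} [DecidableEq α] (s : Finset α) :
    #{e ∈ s.sym2 | ¬e.IsDiag} = (#s).choose 2 := by
  have hdiag : {e ∈ s.sym2 | e.IsDiag} = s.image Sym2.diag := by
    ext e
    induction e using Sym2.ind with
    | _ a b =>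
      simp only [mem_filter, mk_mem_sym2_iff, Sym2.mk_isDiag_iff, mem_image, Sym2.diag,
        Sym2.eq_iff]
      grind
  have hsplit := card_filter_add_card_filter_not (s := s.sym2) Sym2.IsDiag
  rw [hdiag, card_image_of_injective _ Sym2.diag_injective, card_sym2, Nat.choose_succ_succ',
    Nat.choose_one_right] at hsplit
  simp only [Nat.reduceAdd] at hsplit
  omega

section Triangles

variable {V : Type*} [Fintype V] [DecidableEq V] {G : SimpleGraph V} [DecidableRel G.Adj]
  {T : Finset (Sym2 V)}

lemma subset_edgeFinset_of_mem_triEdges (hT : T ∈ triEdges G) : T ⊆ G.edgeFinset := by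
  obtain ⟨s, hs, rfl⟩ := mem_image.1 hT
  intro e he
  obtain ⟨hes, hnd⟩ := mem_filter.1 he
  induction e using Sym2.ind with
  | _ a b =>
    rw [mk_mem_sym2_iff] at hes
    exact SimpleGraph.mem_edgeFinset.2 ((SimpleGraph.mem_cliqueFinset_iff.1 hs).1 hes.1 hes.2
      (by simpa using hnd))

lemma card_of_mem_triEdges (hT : T ∈ triEdges G) : #T = 3 := by
  obtain ⟨s, hs, rfl⟩ := mem_image.1 hT
  rw [card_sym2_filter_not_isDiag, (SimpleGraph.mem_cliqueFinset_iff.1 hs).2]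
  rfl

lemma sup_card_filter_mem_triEdges_pos (hΔ : 0 < #(triEdges G)) :
    0 < G.edgeFinset.sup (fun e => #{T ∈ triEdges G | e ∈ T}) := by
  obtain ⟨T, hT⟩ := card_pos.1 hΔ
  obtain ⟨e, he⟩ := card_pos.1 (by rw [card_of_mem_triEdges hT]; norm_num : 0 < #T)
  exact (card_pos.2 ⟨T, mem_filter.2 ⟨hT, he⟩⟩).trans_le
    (le_sup (f := fun e => #{T ∈ triEdges G | e ∈ T}) (subset_edgeFinset_of_mem_triEdges hT he))

end Triangles

lemma exp_neg_div_lt_half {δ M x y : ℝ} (hδ0 : 0 < δ) (hδ1 : δ < 1) (hM : 2 ≤ M)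
    (hy0 : 0 < y) (hyM : y ≤ M) (hx : 2 * Real.log (M / δ) * M ≤ x) :
    Real.exp (-(x / y)) < δ / 2 := by
  have hL : 0 ≤ Real.log (M / δ) := Real.log_nonneg ((one_le_div hδ0).2 (by linarith))
  have hsq : Real.exp (-(2 * Real.log (M / δ))) = (δ / M) ^ 2 := by
    rw [neg_mul_eq_mul_neg, mul_comm, Real.exp_mul, ← Real.log_inv, inv_div,
      Real.exp_log (by positivity)]
    norm_cast
  calc Real.exp (-(x / y)) ≤ Real.exp (-(2 * Real.log (M / δ))) :=
        Real.exp_le_exp.2 (neg_le_neg ((le_div_iff₀ hy0).2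
          (by nlinarith [mul_le_mul_of_nonneg_left hyM hL])))
    _ = δ ^ 2 / M ^ 2 := by rw [hsq, div_pow]
    _ < δ / 2 := by
        rw [div_lt_div_iff₀ (by positivity) two_pos]
        nlinarith [mul_le_mul_of_nonneg_left (show 4 ≤ M ^ 2 by nlinarith) hδ0.le]

theorem stmt4_general {V : Type*} [Fintype V] [DecidableEq V]
    (G : SimpleGraph V) [DecidableRel G.Adj] (h : ℕ) (ε δ p : ℝ)
    (hΔpos : 0 < (triEdges G).card)
    (hh : h = G.edgeFinset.sup (fun e => ((triEdges G).filter (fun T => e ∈ T)).card))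
    (hε : ε ∈ Set.Ioo (0 : ℝ) 1) (hδ : δ ∈ Set.Ioo (0 : ℝ) 1)
    (hp0 : 0 < p) (hp1 : p ≤ 1)
    (hplb : (2 * ε⁻¹ ^ 2 * Real.log ((3 * (h : ℝ) + 1) / δ) *
        ((3 * (h : ℝ) + 1) / ((triEdges G).card : ℝ))) ^ ((1 : ℝ) / 3) ≤ p) :
    1 - δ < prBer G.edgeFinset p (fun S =>
      |(p ^ 3)⁻¹ * (((triEdges G).filter (fun T => T ⊆ S)).card : ℝ) -
        ((triEdges G).card : ℝ)| < ε * ((triEdges G).card : ℝ)) := by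
  obtain ⟨hε0, hε1⟩ := hε
  obtain ⟨hδ0, hδ1⟩ := hδ
  have hdeg : ∀ e ∈ G.edgeFinset, #{T ∈ triEdges G | e ∈ T} ≤ h := fun e he =>
    hh ▸ le_sup (f := fun e => #{T ∈ triEdges G | e ∈ T}) he
  have hh0 : 0 < h := hh ▸ sup_card_filter_mem_triEdges_pos hΔpos
  have hh1 : (1 : ℝ) ≤ h := Nat.one_le_cast.2 hh0
  set M : ℝ := 3 * h + 1
  set D : ℝ := (#(triEdges G) : ℝ)
  have hμ : 2 * Real.log (M / δ) * M ≤ ε ^ 2 * (p ^ 3 * D) := by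
    have hL : 0 ≤ Real.log (M / δ) := Real.log_nonneg ((one_le_div hδ0).2 (by linarith))
    rw [one_div, Real.rpow_inv_le_iff_of_pos (by positivity) hp0.le three_pos] at hplb
    have hD : 0 < D := Nat.cast_pos.2 hΔpos
    calc 2 * Real.log (M / δ) * M = 2 * ε⁻¹ ^ 2 * Real.log (M / δ) * (M / D) * (ε ^ 2 * D) := by
          field_simp
      _ ≤ p ^ 3 * (ε ^ 2 * D) := by gcongr; exact_mod_cast hplb
      _ = ε ^ 2 * (p ^ 3 * D) := by ring
  have htail : ∀ c : ℝ, 0 < c → c ≤ 3 → Real.exp (-(ε ^ 2 * (p ^ 3 * D) / (c * h))) < δ / 2 :=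
    fun c hc0 hc3 => exp_neg_div_lt_half hδ0 hδ1 (by linarith) (by positivity)
      (by nlinarith) hμ
  linarith [one_sub_exp_sub_exp_le_prBer hp0 hp1 hh0 (fun T => subset_edgeFinset_of_mem_triEdges)
    (fun T => card_of_mem_triEdges) hdeg hε0.le hε1.le, htail 3 three_pos le_rfl,
    htail 2 two_pos (by norm_num)]

/-- Concentration of the fixed-probability independent edge-sampling estimator:
if each edge of `G` is kept independently with probability
`p ≥ (2·ε⁻²·ln((3h+1)/δ)·(3h+1)/|Δ|)^{1/3}`, where `h` is the maximum number of
triangles sharing a single edge and `|Δ| > 0` is the number of triangles of `G`,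
then `|p⁻³·X - |Δ|| < ε·|Δ|` with probability greater than `1 - δ`, where `X` is
the number of triangles all of whose edges are kept. -/
theorem stmt4 {V : Type*} [Fintype V] [DecidableEq V]
    (G : SimpleGraph V) [DecidableRel G.Adj] (t h : ℕ) (ε δ p : ℝ)
    (ht : G.edgeFinset.card = t)
    (hΔpos : 0 < (triEdges G).card)
    (hh : h = G.edgeFinset.sup (fun e => ((triEdges G).filter (fun T => e ∈ T)).card))
    (hε : ε ∈ Set.Ioo (0 : ℝ) 1) (hδ : δ ∈ Set.Ioo (0 : ℝ) 1)
    (hp0 : 0 < p) (hp1 : p ≤ 1)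
    (hplb : (2 * ε⁻¹ ^ 2 * Real.log ((3 * (h : ℝ) + 1) / δ) *
        ((3 * (h : ℝ) + 1) / ((triEdges G).card : ℝ))) ^ ((1 : ℝ) / 3) ≤ p) :
    1 - δ < prBer G.edgeFinset p (fun S =>
      |(p ^ 3)⁻¹ * (((triEdges G).filter (fun T => T ⊆ S)).card : ℝ) -
        ((triEdges G).card : ℝ)| < ε * ((triEdges G).card : ℝ)) :=
  stmt4_general G h ε δ p hΔpos hh hε hδ hp0 hp1 hplb
end

section
/- For all integers M and t with 1 ≤ M < t, one has C(t,M)·(M/t)^M·((t−M)/t)^{t−M} ≥ 1/(e·√M). (This is the probability that a Binomial(t, M/t) random variable equals M.) -/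
/-!
Write `n! = sₙ √(2n) (n/e)ⁿ` with the Stirling sequence `sₙ` and put `q = t - M`. The `(n/e)ⁿ`
factors cancel against the powers, and the probability is `sₜ/(s_M s_q) · √t/(√2 √M √q)`. It remains
to check `√2 s_M s_q √q ≤ e sₜ √t`. Since `sₙ` decreases from `s₁ = e/√2` to `√π`, we have `sₜ ≥ √π` and
`s_M ≤ e/√2`, and Robbins' bound gives `s_q ≤ √π e^{1/(12q)}`. So it is enough that
`e^{1/(12q)} √q ≤ √(q + 1) ≤ √t`.
-/

open Real Nat Filter Topology

namespace Stirling

lemma stirlingSeq_le_stirlingSeq_one {n : ℕ} (hn : n ≠ 0) : stirlingSeq n ≤ exp 1 / √2 := by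
  obtain ⟨k, rfl⟩ := Nat.exists_eq_succ_of_ne_zero hn
  exact stirlingSeq_one ▸ stirlingSeq'_antitone (Nat.zero_le k)

lemma stirlingSeq_le_sqrt_pi_mul_exp {n : ℕ} (hn : n ≠ 0) :
    stirlingSeq n ≤ √π * exp (1 / (12 * n)) := by
  obtain ⟨n, rfl⟩ := Nat.exists_eq_succ_of_ne_zero hn
  -- Robbins' bound makes `log (stirlingSeq k) - 1 / (12 k)` increasing; its limit is `log √π`.
  set g : ℕ → ℝ := fun k ↦ log (stirlingSeq (k + 1)) - 1 / (12 * (k + 1 : ℕ)) with hg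
  have hmono : Monotone g := by
    refine monotone_nat_of_le_succ fun k ↦ ?_
    have hstep := log_stirlingSeq_sdiff_le (k + 1)
    have htele : (1 : ℝ) / (12 * (k + 1 : ℕ) * ((k + 1 : ℕ) + 1)) =
        1 / (12 * (k + 1 : ℕ)) - 1 / (12 * (k + 1 + 1 : ℕ)) := by
      push_cast; field_simp; ring
    simp only [hg]
    linarith
  have hlim : Tendsto g atTop (𝓝 (log √π - 0)) := by
    refine Tendsto.sub ?_ (tendsto_const_nhds.div_atTop ?_)
    · exact ((continuousAt_log (by positivity)).tendsto.comp tendsto_stirlingSeq_sqrt_pi).comp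
        (tendsto_add_atTop_nat 1)
    · exact (tendsto_natCast_atTop_atTop.comp (tendsto_add_atTop_nat 1)).const_mul_atTop
        (by norm_num)
  have hle : log (stirlingSeq (n + 1)) ≤ log √π + 1 / (12 * (n + 1 : ℕ)) := by
    have := hmono.ge_of_tendsto hlim n
    simp only [hg, sub_zero] at this
    linarith
  calc stirlingSeq (n + 1) = exp (log (stirlingSeq (n + 1))) := (exp_log (stirlingSeq'_pos n)).symm
    _ ≤ exp (log √π + 1 / (12 * (n + 1 : ℕ))) := exp_le_exp.mpr hle
    _ = √π * exp (1 / (12 * (n + 1 : ℕ))) := by rw [exp_add, exp_log (by positivity)]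

lemma factorial_eq_stirlingSeq_mul {n : ℕ} (hn : n ≠ 0) :
    (n ! : ℝ) = stirlingSeq n * (√(2 * n) * (n / exp 1) ^ n) := by
  rw [stirlingSeq, div_mul_cancel₀]
  have : (0 : ℝ) < n := by positivity
  positivity

lemma stirlingSeq_pos {n : ℕ} (hn : n ≠ 0) : 0 < stirlingSeq n := by
  obtain ⟨n, rfl⟩ := Nat.exists_eq_succ_of_ne_zero hn
  exact stirlingSeq'_pos n

lemma choose_mul_pow_mul_pow_eq_stirlingSeq {a b : ℕ} (ha : a ≠ 0) (hb : b ≠ 0) :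
    ((a + b).choose a : ℝ) * (a / (a + b : ℝ)) ^ a * (b / (a + b : ℝ)) ^ b =
      stirlingSeq (a + b) / (stirlingSeq a * stirlingSeq b) * (√(a + b) / (√2 * √a * √b)) := by
  have := stirlingSeq_pos ha
  have := stirlingSeq_pos hb
  have : (0 : ℝ) < a := by positivity
  have : (0 : ℝ) < b := by positivity
  rw [Nat.cast_choose ℝ (Nat.le_add_right a b), Nat.add_sub_cancel_left,
    factorial_eq_stirlingSeq_mul (by omega), factorial_eq_stirlingSeq_mul ha,
    factorial_eq_stirlingSeq_mul hb]
  push_cast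
  simp only [sqrt_mul zero_le_two, div_pow, pow_add]
  field_simp

end Stirling

open Stirling

lemma exp_one_div_twelve_mul_mul_sqrt_le {x : ℝ} (hx : 1 ≤ x) :
    exp (1 / (12 * x)) * √x ≤ √(x + 1) := by
  have hx0 : 0 < x := by linarith
  have hexp : exp (1 / (6 * x)) ≤ 1 / (1 - 1 / (6 * x)) :=
    exp_bound_div_one_sub_of_interval (by positivity) (by rw [div_lt_one (by positivity)]; linarith)
  have hsq : exp (1 / (12 * x)) ^ 2 = exp (1 / (6 * x)) := by
    rw [← exp_nat_mul]; congr 1; field_simp; norm_num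
  rw [le_sqrt (by positivity) (by positivity), mul_pow, sq_sqrt hx0.le, hsq]
  calc exp (1 / (6 * x)) * x ≤ 1 / (1 - 1 / (6 * x)) * x := by gcongr
    _ ≤ x + 1 := by
      rw [show 1 / (1 - 1 / (6 * x)) * x = 6 * x ^ 2 / (6 * x - 1) by field_simp]
      rw [div_le_iff₀ (by linarith)]
      nlinarith

/-- For integers `1 ≤ M < t`, the probability that a `Binomial(t, M/t)` random variable
equals `M` is at least `1/(e·√M)`:
`C(t,M)·(M/t)^M·((t-M)/t)^{t-M} ≥ 1/(e·√M)`. -/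
theorem stmt5 (M t : ℕ) (hM : 1 ≤ M) (hMt : M < t) :
    1 / (Real.exp 1 * Real.sqrt M) ≤
      (t.choose M : ℝ) * ((M : ℝ) / t) ^ M * (((t : ℝ) - M) / t) ^ (t - M) := by
  obtain ⟨q, hq, rfl⟩ : ∃ q, q ≠ 0 ∧ t = M + q := ⟨t - M, by omega, by omega⟩
  have hM0 : M ≠ 0 := by omega
  have hq1 : (1 : ℝ) ≤ q := by exact_mod_cast Nat.one_le_iff_ne_zero.mpr hq
  rw [Nat.add_sub_cancel_left, Nat.cast_add, add_sub_cancel_left,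
    choose_mul_pow_mul_pow_eq_stirlingSeq hM0 hq]
  have hM1 : (1 : ℝ) ≤ M := by exact_mod_cast hM
  have := stirlingSeq_pos hM0
  have := stirlingSeq_pos hq
  have := stirlingSeq_pos (show M + q ≠ 0 by omega)
  calc 1 / (exp 1 * √M)
      ≤ √(M + q) / (exp (1 / (12 * q)) * √q) * (1 / (exp 1 * √M)) := by
        refine le_mul_of_one_le_left (by positivity) ?_
        rw [one_le_div (by positivity)]
        exact (exp_one_div_twelve_mul_mul_sqrt_le hq1).trans (sqrt_le_sqrt (by linarith))
    _ = √π / (exp 1 / √2 * (√π * exp (1 / (12 * q)))) * (√(M + q) / (√2 * √M * √q)) := by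
        field_simp
    _ ≤ stirlingSeq (M + q) / (stirlingSeq M * stirlingSeq q) * (√(M + q) / (√2 * √M * √q)) := by
        gcongr
        · exact sqrt_pi_le_stirlingSeq (by omega)
        · exact stirlingSeq_le_stirlingSeq_one hM0
        · exact stirlingSeq_le_sqrt_pi_mul_exp hq
end

section
/- Let 0 < α < 1 be a real constant and let M, t, T be integers with M > max{ 8α/(1−α), 42 } and M < t ≤ α·T. Let f(t) = t(t−1)(t−2)/(M(M−1)(M−2)) − 1, g(t) = t(t−1)(t−2)(M−3)(M−4)/((t−3)(t−4)·M(M−1)(M−2)) − 1, h(t) = t(t−1)(t−2)(M−3)(M−4)(M−5)/((t−3)(t−4)(t−5)·M(M−1)(M−2)) − 1, and let f̄ = (T/M)³ − 1, ḡ = T/M − 1. Then for all real numbers D ≥ 1, r ≥ 0, w ≥ 0, one has D·f(t) + r·g(t) + w·h(t) < D·f̄ + r·ḡ; in particular f(t) < f̄ and g(t) < ḡ. -/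
set_option maxHeartbeats 1000000


/-- Variance comparison between TRIÈST-base and the fixed-probability approach
(MASCOT-C with `p = M/T`): for a real constant `0 < α < 1` and integers
`M > max{8α/(1-α), 42}` and `M < t ≤ α·T`, the TRIÈST-base variance coefficients
satisfy `D·f(t) + r·g(t) + w·h(t) < D·f̄ + r·ḡ` for all `D ≥ 1`, `r ≥ 0`, `w ≥ 0`;
in particular `f(t) < f̄` and `g(t) < ḡ`. -/
theorem stmt11 (α : ℝ) (M t T : ℕ) (hα0 : 0 < α) (hα1 : α < 1)
    (hM : max (8 * α / (1 - α)) 42 < (M : ℝ))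
    (hMt : M < t) (htT : (t : ℝ) ≤ α * (T : ℝ))
    (f g h fbar gbar : ℝ)
    (hf : f = (t : ℝ) * ((t : ℝ) - 1) * ((t : ℝ) - 2) /
      ((M : ℝ) * ((M : ℝ) - 1) * ((M : ℝ) - 2)) - 1)
    (hg : g = (t : ℝ) * ((t : ℝ) - 1) * ((t : ℝ) - 2) * ((M : ℝ) - 3) * ((M : ℝ) - 4) /
      ((((t : ℝ) - 3) * ((t : ℝ) - 4)) * ((M : ℝ) * ((M : ℝ) - 1) * ((M : ℝ) - 2))) - 1)
    (hh : h = (t : ℝ) * ((t : ℝ) - 1) * ((t : ℝ) - 2) *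
        ((M : ℝ) - 3) * ((M : ℝ) - 4) * ((M : ℝ) - 5) /
      ((((t : ℝ) - 3) * ((t : ℝ) - 4) * ((t : ℝ) - 5)) *
        ((M : ℝ) * ((M : ℝ) - 1) * ((M : ℝ) - 2))) - 1)
    (hfbar : fbar = ((T : ℝ) / (M : ℝ)) ^ 3 - 1)
    (hgbar : gbar = (T : ℝ) / (M : ℝ) - 1) :
    (∀ D r w : ℝ, 1 ≤ D → 0 ≤ r → 0 ≤ w →
      D * f + r * g + w * h < D * fbar + r * gbar)
    ∧ f < fbar ∧ g < gbar := by
  set m : ℝ := (M : ℝ) with hmdef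
  set s : ℝ := (t : ℝ) with hsdef
  have hm42 : (42 : ℝ) < m := lt_of_le_of_lt (le_max_right _ _) hM
  have hMα : 8 * α / (1 - α) < m := lt_of_le_of_lt (le_max_left _ _) hM
  have h1α : (0 : ℝ) < 1 - α := by linarith
  have hms : m < s := by rw [hmdef, hsdef]; exact_mod_cast hMt
  have hm0 : (0 : ℝ) < m := by linarith
  have hm1 : (0 : ℝ) < m - 1 := by linarith
  have hm2 : (0 : ℝ) < m - 2 := by linarith
  have hm3 : (0 : ℝ) < m - 3 := by linarith
  have hm4 : (0 : ℝ) < m - 4 := by linarith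
  have hm5 : (0 : ℝ) < m - 5 := by linarith
  have hs0 : (0 : ℝ) < s := by linarith
  have hs1 : (0 : ℝ) < s - 1 := by linarith
  have hs2 : (0 : ℝ) < s - 2 := by linarith
  have hs3 : (0 : ℝ) < s - 3 := by linarith
  have hs4 : (0 : ℝ) < s - 4 := by linarith
  have hs5 : (0 : ℝ) < s - 5 := by linarith
  have hT0 : (0 : ℝ) < (T : ℝ) := by
    by_contra hc
    push_neg at hc
    have : α * (T : ℝ) ≤ 0 := mul_nonpos_iff.mpr (Or.inl ⟨hα0.le, hc⟩)
    linarith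
  -- (1-α) * m > 3
  have hαM3 : (3 : ℝ) < (1 - α) * m := by
    rcases le_or_gt (3 / 8) α with hc | hc
    · have h8 : 8 * α < m * (1 - α) := (div_lt_iff₀ h1α).mp hMα
      nlinarith
    · nlinarith
  have hQ : (0 : ℝ) < m * (m - 1) * (m - 2) := by positivity
  -- f < fbar
  have hff : f < fbar := by
    have key : s * (s - 1) * (s - 2) * (α ^ 3 * m ^ 3) <
        s ^ 3 * (m * (m - 1) * (m - 2)) := by
      have hα3 : α ^ 3 < α := by
        nlinarith [mul_pos (mul_pos hα0 h1α) (show (0:ℝ) < 1 + α by linarith)]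
      have c1 : α ^ 3 * m ^ 2 < α * m ^ 2 :=
        mul_lt_mul_of_pos_right hα3 (by positivity)
      have c2 : (s - 1) * (s - 2) < s * s := by nlinarith
      have c3 : α ^ 3 * m ^ 2 * ((s - 1) * (s - 2)) < α * m ^ 2 * (s * s) :=
        mul_lt_mul'' c1 c2 (by positivity) (by positivity)
      have c4 : α * m ^ 2 < (m - 1) * (m - 2) := by
        have := mul_lt_mul_of_pos_right hαM3 hm0
        nlinarith [this]
      have c5 : α * m ^ 2 * (s * s) < (m - 1) * (m - 2) * (s * s) :=
        mul_lt_mul_of_pos_right c4 (by positivity)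
      have c6 := mul_lt_mul_of_pos_left (c3.trans c5) (mul_pos hm0 hs0)
      linarith [c6]
    have step1 : s * (s - 1) * (s - 2) / (m * (m - 1) * (m - 2)) <
        s ^ 3 / (α ^ 3 * m ^ 3) := by
      rw [div_lt_div_iff₀ hQ (by positivity)]
      exact key
    have step2 : s ^ 3 / (α ^ 3 * m ^ 3) ≤ ((T : ℝ)) ^ 3 / m ^ 3 := by
      rw [div_le_div_iff₀ (by positivity) (by positivity)]
      have hcube : s ^ 3 ≤ (α * (T : ℝ)) ^ 3 :=
        pow_le_pow_left₀ hs0.le htT 3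
      have := mul_le_mul_of_nonneg_right hcube (le_of_lt (pow_pos hm0 3))
      nlinarith [this]
    rw [hf, hfbar, div_pow]
    have := step1.trans_le step2
    linarith
  -- g < gbar
  have hgg : g < gbar := by
    have key : s * (s - 1) * (s - 2) * (m - 3) * (m - 4) * (α * m) <
        s * ((s - 3) * (s - 4) * (m * (m - 1) * (m - 2))) := by
      have e1 : (s - 1) * (m - 3) < (s - 3) * (m - 1) := by nlinarith
      have e2 : (s - 2) * (m - 4) < (s - 4) * (m - 2) := by nlinarith
      have p1 : ((s - 1) * (m - 3)) * ((s - 2) * (m - 4)) <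
          ((s - 3) * (m - 1)) * ((s - 4) * (m - 2)) :=
        mul_lt_mul'' e1 e2 (by positivity) (by positivity)
      have p2 : α * (((s - 1) * (m - 3)) * ((s - 2) * (m - 4))) <
          ((s - 3) * (m - 1)) * ((s - 4) * (m - 2)) := by
        have : α * (((s - 1) * (m - 3)) * ((s - 2) * (m - 4))) <
            1 * (((s - 1) * (m - 3)) * ((s - 2) * (m - 4))) :=
          mul_lt_mul_of_pos_right hα1 (by positivity)
        linarith [this, p1]
      have c := mul_lt_mul_of_pos_left p2 (mul_pos hm0 hs0)
      linarith [c]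
    have hDg : (0 : ℝ) < (s - 3) * (s - 4) * (m * (m - 1) * (m - 2)) := by positivity
    have step1 : s * (s - 1) * (s - 2) * (m - 3) * (m - 4) /
        ((s - 3) * (s - 4) * (m * (m - 1) * (m - 2))) < s / (α * m) := by
      rw [div_lt_div_iff₀ hDg (by positivity)]
      exact key
    have step2 : s / (α * m) ≤ (T : ℝ) / m := by
      rw [div_le_div_iff₀ (by positivity) hm0]
      have := mul_le_mul_of_nonneg_right htT hm0.le
      nlinarith [this]
    rw [hg, hgbar]
    have := step1.trans_le step2
    linarith
  -- h < 0
  have hhh : h < 0 := by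
    have e1 : s * (m - 3) < (s - 3) * m := by nlinarith
    have e2 : (s - 1) * (m - 4) < (s - 4) * (m - 1) := by nlinarith
    have e3 : (s - 2) * (m - 5) < (s - 5) * (m - 2) := by nlinarith
    have p1 : (s * (m - 3)) * ((s - 1) * (m - 4)) <
        ((s - 3) * m) * ((s - 4) * (m - 1)) :=
      mul_lt_mul'' e1 e2 (by positivity) (by positivity)
    have p2 : ((s * (m - 3)) * ((s - 1) * (m - 4))) * ((s - 2) * (m - 5)) <
        (((s - 3) * m) * ((s - 4) * (m - 1))) * ((s - 5) * (m - 2)) :=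
      mul_lt_mul'' p1 e3 (by positivity) (by positivity)
    have hDh : (0 : ℝ) < (s - 3) * (s - 4) * (s - 5) * (m * (m - 1) * (m - 2)) := by
      positivity
    have : s * (s - 1) * (s - 2) * (m - 3) * (m - 4) * (m - 5) /
        ((s - 3) * (s - 4) * (s - 5) * (m * (m - 1) * (m - 2))) < 1 := by
      rw [div_lt_one hDh]
      linarith [p2]
    rw [hh]
    linarith
  refine ⟨?_, hff, hgg⟩
  intro D r w hD hr hw
  have hD0 : (0 : ℝ) < D := lt_of_lt_of_le one_pos hD
  have t1 : D * f < D * fbar := mul_lt_mul_of_pos_left hff hD0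
  have t2 : r * g ≤ r * gbar := mul_le_mul_of_nonneg_left hgg.le hr
  have t3 : w * h ≤ 0 := mul_nonpos_iff.mpr (Or.inl ⟨hw, hhh.le⟩)
  linarith
end

section
/- Let t > M ≥ 2 be integers, let D > 0 and z ≥ 0 be real numbers, let ε, δ ∈ (0,1), and let η = max{1, (t−1)(t−2)/(M(M−1))}. Suppose M > √( 2(t−1)(t−2)/(δ·ε²·D + 2) + 1/4 ) + 1/2 and M > 2·z·(t−1)/(δ·ε²·D² + 2z). Then D·(η − 1) + z·(t−1−M)/M < δ·ε²·D². Consequently, by Chebyshev's inequality, every real random variable X with E[X] = D and Var[X] ≤ D·(η−1) + z·(t−1−M)/M satisfies Pr(|X − D| < ε·D) > 1 − δ. -/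
open MeasureTheory ProbabilityTheory

/-! Chebyshev's inequality reduces the claim to `Var[X] < δ (εD)²`, so it suffices to bound the two
terms of the variance bound by `δε²D²/2` each. The first threshold on `M` is the larger root of
`M(M-1) = 2(t-1)(t-2)/(δε²D+2)`, which makes `(t-1)(t-2)/(M(M-1)) < 1 + δε²D/2`; the second one
rearranges to `z(t-1-M)/M < δε²D²/2`. -/

lemma cast_sub_one_mul_cast_sub_two_nonneg (n : ℕ) : 0 ≤ ((n : ℝ) - 1) * ((n : ℝ) - 2) := by
  rcases n with _ | _ | n
  · norm_num
  · norm_num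
  · push_cast
    nlinarith

lemma lt_mul_sub_one_of_sqrt_add_lt {c m : ℝ} (hc : -(1 / 4) ≤ c)
    (h : √(c + 1 / 4) + 1 / 2 < m) : c < m * (m - 1) := by
  have hsq := Real.sq_sqrt (by linarith : 0 ≤ c + 1 / 4)
  nlinarith [Real.sqrt_nonneg (c + 1 / 4)]

lemma max_one_div_sub_one_lt_of_sqrt_lt {a x m : ℝ} (ha : 0 ≤ a) (hx : 0 < x)
    (h : √(2 * a / (x + 2) + 1 / 4) + 1 / 2 < m) :
    max 1 (a / (m * (m - 1))) - 1 < x / 2 := by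
  have hc : 0 ≤ 2 * a / (x + 2) := by positivity
  have hmm := lt_mul_sub_one_of_sqrt_add_lt (by linarith) h
  have hpos : 0 < m * (m - 1) := hc.trans_lt hmm
  rw [div_lt_iff₀ (by positivity)] at hmm
  rw [sub_lt_iff_lt_add]
  refine max_lt (by linarith) ?_
  rw [div_lt_iff₀ hpos]
  nlinarith

lemma mul_sub_div_lt_half_of_div_lt {z y n m : ℝ} (hz : 0 ≤ z) (hy : 0 < y) (hm : 0 < m)
    (h : 2 * z * n / (y + 2 * z) < m) : z * ((n - m) / m) < y / 2 := by
  rw [div_lt_iff₀ (by positivity)] at h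
  rw [mul_div_assoc', div_lt_iff₀ hm]
  linarith

lemma one_sub_lt_measureReal_abs_sub_integral_lt {Ω : Type*} [MeasurableSpace Ω]
    {μ : Measure Ω} [IsProbabilityMeasure μ] {X : Ω → ℝ} (hX : MemLp X 2 μ) {c δ : ℝ}
    (hc : 0 < c) (hvar : variance X μ < δ * c ^ 2) :
    1 - δ < μ.real {ω | |X ω - μ[X]| < c} := by
  have hfar : μ.real {ω | c ≤ |X ω - μ[X]|} ≤ variance X μ / c ^ 2 :=
    ENNReal.toReal_le_of_le_ofReal (div_nonneg (variance_nonneg X μ) (by positivity)) (meas_ge_le_variance_div_sq hX hc)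
  have hcover : 1 ≤ μ.real {ω | |X ω - μ[X]| < c} + μ.real {ω | c ≤ |X ω - μ[X]|} := by
    calc (1 : ℝ) = μ.real ({ω | |X ω - μ[X]| < c} ∪ {ω | c ≤ |X ω - μ[X]|}) := by
          rw [← probReal_univ (μ := μ)]
          congr 1
          ext ω
          simp only [Set.mem_univ, Set.mem_union, Set.mem_ofPred_eq, true_iff]
          exact lt_or_ge _ _
      _ ≤ _ := measureReal_union_le _ _
  have hratio : variance X μ / c ^ 2 < δ := (div_lt_iff₀ (by positivity)).2 hvar
  linarith

theorem stmt15_general (M t : ℕ) (D z ε δ η : ℝ)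
    (hD : 0 < D) (hz : 0 ≤ z)
    (hε : ε ∈ Set.Ioo (0 : ℝ) 1) (hδ : δ ∈ Set.Ioo (0 : ℝ) 1)
    (hη : η = max 1 (((t : ℝ) - 1) * ((t : ℝ) - 2) / ((M : ℝ) * ((M : ℝ) - 1))))
    (hM1 : Real.sqrt (2 * ((t : ℝ) - 1) * ((t : ℝ) - 2) / (δ * ε ^ 2 * D + 2) + 1 / 4)
      + 1 / 2 < (M : ℝ))
    (hM2' : 2 * z * ((t : ℝ) - 1) / (δ * ε ^ 2 * D ^ 2 + 2 * z) < (M : ℝ)) :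
    (D * (η - 1) + z * (((t : ℝ) - 1 - (M : ℝ)) / (M : ℝ)) < δ * ε ^ 2 * D ^ 2)
    ∧ ∀ (Ω : Type) (_ : MeasurableSpace Ω) (μ : Measure Ω)
        (_ : IsProbabilityMeasure μ) (X : Ω → ℝ),
        MemLp X 2 μ →
        (∫ ω, X ω ∂μ) = D →
        variance X μ ≤ D * (η - 1) + z * (((t : ℝ) - 1 - (M : ℝ)) / (M : ℝ)) →
        1 - δ < (μ {ω | |X ω - D| < ε * D}).toReal := by
  obtain ⟨hε0, -⟩ := hε
  obtain ⟨hδ0, -⟩ := hδ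
  rw [mul_assoc 2] at hM1
  have hη1 : η - 1 < δ * ε ^ 2 * D / 2 := hη ▸
    max_one_div_sub_one_lt_of_sqrt_lt (cast_sub_one_mul_cast_sub_two_nonneg t) (by positivity) hM1
  have hMpos : (0 : ℝ) < M := lt_of_le_of_lt (by positivity) hM1
  have hbound : D * (η - 1) + z * (((t : ℝ) - 1 - (M : ℝ)) / (M : ℝ)) < δ * ε ^ 2 * D ^ 2 := by
    have hfirst : D * (η - 1) < D * (δ * ε ^ 2 * D / 2) := mul_lt_mul_of_pos_left hη1 hD
    have hsecond := mul_sub_div_lt_half_of_div_lt hz (by positivity) hMpos hM2'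
    linarith
  refine ⟨hbound, fun Ω _ μ _ X hX hmean hvar => ?_⟩
  have hvar' : variance X μ < δ * (ε * D) ^ 2 := by linarith
  simpa only [hmean, measureReal_def] using one_sub_lt_measureReal_abs_sub_integral_lt hX (by positivity) hvar'

/-- Quantitative core of the concentration theorem for TRIÈST-IMPR: for integers
`t > M ≥ 2`, reals `D > 0`, `z ≥ 0`, `ε, δ ∈ (0,1)` and
`η = max{1, (t-1)(t-2)/(M(M-1))}`, if `M` exceeds the two stated thresholds then
`D·(η-1) + z·(t-1-M)/M < δ·ε²·D²`; consequently, by Chebyshev's inequality, every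
real random variable `X` with `E[X] = D` and `Var[X] ≤ D·(η-1) + z·(t-1-M)/M`
satisfies `Pr(|X - D| < ε·D) > 1 - δ`. -/
theorem stmt15 (M t : ℕ) (D z ε δ η : ℝ)
    (hM2 : 2 ≤ M) (hMt : M < t) (hD : 0 < D) (hz : 0 ≤ z)
    (hε : ε ∈ Set.Ioo (0 : ℝ) 1) (hδ : δ ∈ Set.Ioo (0 : ℝ) 1)
    (hη : η = max 1 (((t : ℝ) - 1) * ((t : ℝ) - 2) / ((M : ℝ) * ((M : ℝ) - 1))))
    (hM1 : Real.sqrt (2 * ((t : ℝ) - 1) * ((t : ℝ) - 2) / (δ * ε ^ 2 * D + 2) + 1 / 4)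
      + 1 / 2 < (M : ℝ))
    (hM2' : 2 * z * ((t : ℝ) - 1) / (δ * ε ^ 2 * D ^ 2 + 2 * z) < (M : ℝ)) :
    (D * (η - 1) + z * (((t : ℝ) - 1 - (M : ℝ)) / (M : ℝ)) < δ * ε ^ 2 * D ^ 2)
    ∧ ∀ (Ω : Type) (_ : MeasurableSpace Ω) (μ : Measure Ω)
        (_ : IsProbabilityMeasure μ) (X : Ω → ℝ),
        MemLp X 2 μ →
        (∫ ω, X ω ∂μ) = D →
        variance X μ ≤ D * (η - 1) + z * (((t : ℝ) - 1 - (M : ℝ)) / (M : ℝ)) →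
        1 - δ < (μ {ω | |X ω - D| < ε * D}).toReal :=
  stmt15_general M t D z ε δ η hD hz hε hδ hη hM1 hM2'
end

section
/- Let E be a finite set with |E| = n, let M be an integer with 1 ≤ M < n, and let S be a random subset of E distributed uniformly over all M-element subsets of E. Let B and C be disjoint subsets of E with |B| = 2 and |C| = i where 1 ≤ i ≤ M − 2. Then Pr(C ⊆ S | B ⊆ S) ≤ Pr(C ⊆ S); equivalently, Pr(B ∪ C ⊆ S) ≤ Pr(B ⊆ S)·Pr(C ⊆ S). -/
open Finset
open scoped Classical

/-- Probability, under the uniform distribution over the `M`-element subsets of `E`,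
of the event `P`. -/
noncomputable def prUnif {α : Type*} (E : Finset α) (M : ℕ) (P : Finset α → Prop) : ℝ :=
  (∑ S ∈ E.powersetCard M, if P S then (1 : ℝ) else 0) / (E.powersetCard M).card

/-!
For `A ⊆ E` and `M ≤ n = |E|`, counting the `M`-subsets containing `A` gives
`Pr(A ⊆ S) = M.descFactorial |A| / n.descFactorial |A|`. For disjoint `A`, `A'` with
`|A| = a`, `|A'| = b`, split `M.descFactorial (a + b) = M.descFactorial a * (M - a).descFactorial b`
and likewise for `n`; negative correlation then reduces to the factorwise inequality
`(M - a - j) / (n - a - j) ≤ (M - j) / (n - j)`, which holds because `M ≤ n`.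
-/

theorem Nat.sub_mul_le_mul_sub {x y : ℕ} (hxy : x ≤ y) (a : ℕ) :
    (x - a) * y ≤ x * (y - a) := by
  rw [Nat.sub_mul, Nat.mul_sub, Nat.mul_comm a y]
  exact Nat.sub_le_sub_left (Nat.mul_le_mul_right a hxy) _

theorem Nat.sub_descFactorial_mul_le {M n : ℕ} (hMn : M ≤ n) (a b : ℕ) :
    (M - a).descFactorial b * n.descFactorial b ≤ M.descFactorial b * (n - a).descFactorial b := by
  induction b with
  | zero => simp
  | succ b ih =>
    have step : (M - a - b) * (n - b) ≤ (M - b) * (n - a - b) := by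
      rw [Nat.sub_right_comm M, Nat.sub_right_comm n]
      exact Nat.sub_mul_le_mul_sub (Nat.sub_le_sub_right hMn b) a
    simp only [Nat.descFactorial_succ]
    calc (M - a - b) * (M - a).descFactorial b * ((n - b) * n.descFactorial b)
        = ((M - a - b) * (n - b)) * ((M - a).descFactorial b * n.descFactorial b) := by ring
      _ ≤ ((M - b) * (n - a - b)) * (M.descFactorial b * (n - a).descFactorial b) :=
        Nat.mul_le_mul step ih
      _ = (M - b) * M.descFactorial b * ((n - a - b) * (n - a).descFactorial b) := by ring

theorem Nat.descFactorial_div_add_le {M n : ℕ} (hMn : M ≤ n) {a b : ℕ} (hab : a + b ≤ n) :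
    (M.descFactorial (a + b) : ℝ) / n.descFactorial (a + b)
      ≤ (M.descFactorial a / n.descFactorial a) * (M.descFactorial b / n.descFactorial b) := by
  have hpos : ∀ {m k : ℕ}, k ≤ m → (0 : ℝ) < m.descFactorial k := fun hk =>
    Nat.cast_pos.mpr (Nat.descFactorial_pos.mpr hk)
  rw [_root_.div_mul_div_comm, div_le_div_iff₀ (hpos hab)
    (mul_pos (hpos (by omega)) (hpos (by omega)))]
  rw [← Nat.descFactorial_mul_descFactorial (Nat.le_add_right a b), Nat.add_sub_cancel_left,
    ← Nat.descFactorial_mul_descFactorial (Nat.le_add_right a b), Nat.add_sub_cancel_left]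
  have hfactors := Nat.sub_descFactorial_mul_le hMn a b
  norm_cast
  calc (M - a).descFactorial b * M.descFactorial a * (n.descFactorial a * n.descFactorial b)
      = M.descFactorial a * n.descFactorial a * ((M - a).descFactorial b * n.descFactorial b) := by
        ring
    _ ≤ M.descFactorial a * n.descFactorial a * (M.descFactorial b * (n - a).descFactorial b) :=
      Nat.mul_le_mul_left _ hfactors
    _ = M.descFactorial a * M.descFactorial b * ((n - a).descFactorial b * n.descFactorial a) := by
      ring

section

variable {α : Type*}

theorem prUnif_nonneg (E : Finset α) (M : ℕ) (P : Finset α → Prop) : 0 ≤ prUnif E M P := by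
  unfold prUnif
  positivity

theorem prUnif_eq_card_filter_div (E : Finset α) (M : ℕ) (P : Finset α → Prop) [DecidablePred P] :
    prUnif E M P = #{S ∈ E.powersetCard M | P S} / (#E).choose M := by
  simp only [prUnif, card_powersetCard, natCast_card_filter]
  congr!

theorem prUnif_of_card_lt {E : Finset α} {M : ℕ} (h : #E < M) (P : Finset α → Prop) :
    prUnif E M P = 0 := by
  simp [prUnif, powersetCard_eq_empty.mpr h]

theorem prUnif_subset_of_not_subset {E A : Finset α} (hAE : ¬ A ⊆ E) (M : ℕ) :
    prUnif E M (A ⊆ ·) = 0 := by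
  rw [prUnif_eq_card_filter_div, filter_eq_empty_iff.mpr, card_empty, Nat.cast_zero, zero_div]
  exact fun S hS hAS => hAE (hAS.trans (mem_powersetCard.mp hS).1)

variable [DecidableEq α]

theorem prUnif_subset_eq {E A : Finset α} {M : ℕ} (hAE : A ⊆ E) (hME : M ≤ #E) :
    prUnif E M (A ⊆ ·) = (M.descFactorial #A : ℝ) / (#E).descFactorial #A := by
  rw [prUnif_eq_card_filter_div]
  rcases le_or_gt #A M with hAM | hMA
  · rw [card_filter_powersetCard_subset _ _ _ hAE hAM, div_eq_div_iff
      (Nat.cast_ne_zero.mpr (Nat.choose_pos hME).ne')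
      (Nat.cast_ne_zero.mpr (Nat.descFactorial_pos.mpr (card_le_card hAE)).ne'),
      Nat.descFactorial_eq_factorial_mul_choose, Nat.descFactorial_eq_factorial_mul_choose]
    have hchoose := Nat.choose_mul (n := #E) hAM
    norm_cast
    grind
  · have hfilter : {S ∈ E.powersetCard M | A ⊆ S} = ∅ := filter_eq_empty_iff.mpr
      fun S hS hAS => (card_le_card hAS).not_gt ((mem_powersetCard.mp hS).2 ▸ hMA)
    rw [hfilter, Nat.descFactorial_eq_zero_iff_lt.mpr hMA]
    simp

theorem prUnif_union_subset_le_mul (E : Finset α) (M : ℕ) {A A' : Finset α}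
    (h : Disjoint A A') :
    prUnif E M (fun S => A ∪ A' ⊆ S) ≤ prUnif E M (A ⊆ ·) * prUnif E M (A' ⊆ ·) := by
  rcases lt_or_ge #E M with hEM | hME
  · simp only [prUnif_of_card_lt hEM, mul_zero, le_refl]
  by_cases hAE : A ∪ A' ⊆ E
  · obtain ⟨hA, hA'⟩ := union_subset_iff.mp hAE
    have hcard : #A + #A' ≤ #E := card_union_of_disjoint h ▸ card_le_card hAE
    rw [prUnif_subset_eq hAE hME, prUnif_subset_eq hA hME, prUnif_subset_eq hA' hME,
      card_union_of_disjoint h]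
    exact Nat.descFactorial_div_add_le hME hcard
  · rw [prUnif_subset_of_not_subset hAE]
    exact mul_nonneg (prUnif_nonneg _ _ _) (prUnif_nonneg _ _ _)

end

theorem stmt17_general {α : Type*} [DecidableEq α] (E B C : Finset α) (M : ℕ)
    (hdisj : Disjoint B C) :
    prUnif E M (fun S => C ⊆ S ∧ B ⊆ S) / prUnif E M (fun S => B ⊆ S)
        ≤ prUnif E M (fun S => C ⊆ S)
    ∧ prUnif E M (fun S => B ∪ C ⊆ S)
        ≤ prUnif E M (fun S => B ⊆ S) * prUnif E M (fun S => C ⊆ S) := by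
  have hcorr := prUnif_union_subset_le_mul E M hdisj
  have hevent : (fun S => C ⊆ S ∧ B ⊆ S) = fun S => B ∪ C ⊆ S := by
    funext S
    rw [union_subset_iff, and_comm]
  refine ⟨?_, hcorr⟩
  rw [hevent]
  exact div_le_of_le_mul₀ (prUnif_nonneg _ _ _) (prUnif_nonneg _ _ _) (by rwa [mul_comm])

/-- Negative correlation in reservoir sampling: if `S` is a uniformly random `M`-element
subset of an `n`-element set `E` (with `1 ≤ M < n`), and `B, C ⊆ E` are disjoint with
`|B| = 2` and `|C| = i`, `1 ≤ i ≤ M - 2`, then `Pr(C ⊆ S | B ⊆ S) ≤ Pr(C ⊆ S)`;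
equivalently, `Pr(B ∪ C ⊆ S) ≤ Pr(B ⊆ S)·Pr(C ⊆ S)`. -/
theorem stmt17 {α : Type*} [DecidableEq α] (E B C : Finset α) (n M i : ℕ)
    (hE : E.card = n) (hM : 1 ≤ M) (hMn : M < n)
    (hBE : B ⊆ E) (hCE : C ⊆ E) (hdisj : Disjoint B C)
    (hB : B.card = 2) (hC : C.card = i) (hi1 : 1 ≤ i) (hiM : i ≤ M - 2) :
    prUnif E M (fun S => C ⊆ S ∧ B ⊆ S) / prUnif E M (fun S => B ⊆ S)
        ≤ prUnif E M (fun S => C ⊆ S)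
    ∧ prUnif E M (fun S => B ∪ C ⊆ S)
        ≤ prUnif E M (fun S => B ⊆ S) * prUnif E M (fun S => C ⊆ S) :=
  stmt17_general E B C M hdisj
end
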